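/- Let $(\mathcal{A},[~,~],N)$ be a Nijenhuis mock-Lie algebra, $(V,\rho)$ a finite-dimensional representation of $(\mathcal{A},[~,~])$, $(V^*,\rho^*,\beta^*)$ a representation of $(\mathcal{A},[~,~],N)$, and $S:\mathcal{A}\to\mathcal{A}$, $\alpha:V\to V$, $T:V\to\mathcal{A}$ linear maps. View $T$ as an element of $(\mathcal{A}\ltimes_{\rho^*}V^*)^{\otimes 2}$ via $T=\sum_i T(e_i)\otimes e_i^*$. Then $r = T - \tau(T)$ is an antisymmetric solution of the $(S+\alpha^*)$-admissible mock-Lie Yang-Baxter equation in the Nijenhuis mock-Lie algebra $(\mathcal{A}\ltimes_{\rho^*}V^*, N+\beta^*)$ if and only if $T$ is a weak $\mathcal{O}$-operator associated to $(V,\rho)$ and $\alpha$ (i.e. $[T(u),T(v)]=T(\rho(T(u))v+\rho(T(v))u)$ and $N\circ T=T\circ\alpha$) and satisfies $T\circ\beta=S\circ T$. -/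

import Mathlib

/-!
Write `r = ∑ᵢ (T eᵢ, 0) ⊗ (0, eᵢ^*) - (0, eᵢ^*) ⊗ (T eᵢ, 0)`. Every coadjoint term `ρ^*(x) eᵢ^*`
in the expansion of the Yang–Baxter and admissibility tensors is paired with `T eᵢ`, and the
identity `∑ᵢ eᵢ ⊗ γ^* eᵢ^* = ∑ᵢ γ eᵢ ⊗ eᵢ^*` moves it onto `T`. Afterwards the Yang–Baxter tensor
is the `𝒪`-operator defect `D(u, v) = [Tu, Tv] - T(ρ(Tu)v + ρ(Tv)u)`, read in `A ⊗ V^* ⊗ V^*`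
and placed once in each tensor slot, while each admissibility tensor places `NT - Tα` and
`ST - Tβ` (or the other way round) in the two slots of `A ⊗ V^*`. Evaluating the `V^*`-factors
on the basis shows that these tensors vanish exactly when `D`, `NT - Tα` and `ST - Tβ` do.
-/

open TensorProduct Module

/-- The semi-direct product bracket on `A ⊕ V^*` for the dual action `ρ^*`. -/
def sdBracket {K A V : Type*} [Field K] [AddCommGroup A] [Module K A]
    [AddCommGroup V] [Module K V] (b : A →ₗ[K] A →ₗ[K] A)
    (ρ : A →ₗ[K] V →ₗ[K] V) (u v : A × Dual K V) : A × Dual K V :=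
  (b u.1 v.1, (ρ u.1).dualMap v.2 + (ρ v.1).dualMap u.2)

/-- Componentwise map `(N + β^*)` on `A ⊕ V^*`. -/
def cwMap {K A V : Type*} [Field K] [AddCommGroup A] [Module K A]
    [AddCommGroup V] [Module K V] (N : A →ₗ[K] A) (β : V →ₗ[K] V)
    (u : A × Dual K V) : A × Dual K V :=
  (N u.1, β.dualMap u.2)

/-- Left components of `r = T - τ(T)` in `(A ⋉ V^*) ⊗ (A ⋉ V^*)`. -/
noncomputable def rLeft {K A V ι : Type*} [Field K] [AddCommGroup A] [Module K A]
    [AddCommGroup V] [Module K V] [Fintype ι] [DecidableEq ι]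
    (e : Basis ι K V) (T : V →ₗ[K] A) : ι ⊕ ι → A × Dual K V :=
  Sum.elim (fun i => (T (e i), 0)) (fun i => (0, - e.coord i))

/-- Right components of `r = T - τ(T)`. -/
noncomputable def rRight {K A V ι : Type*} [Field K] [AddCommGroup A] [Module K A]
    [AddCommGroup V] [Module K V] [Fintype ι] [DecidableEq ι]
    (e : Basis ι K V) (T : V →ₗ[K] A) : ι ⊕ ι → A × Dual K V :=
  Sum.elim (fun i => ((0 : A), e.coord i)) (fun i => (T (e i), 0))

namespace Module.Basis

variable {K V ι P : Type*} [CommSemiring K] [AddCommMonoid V] [Module K V] [Fintype ι]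
  [AddCommMonoid P] [Module K P] (e : Basis ι K V)

theorem sum_coord_smul_apply (f : V →ₗ[K] P) (v : V) : ∑ i, e.coord i v • f (e i) = f v := by
  simp_rw [coord_apply, ← map_smul, ← map_sum, e.sum_repr]

/-- `γ^* ⊗ 1` and `1 ⊗ γ` agree on the canonical element `∑ e_i^* ⊗ e_i` of `V^* ⊗ V`. -/
theorem sum_dualMap_coord (γ : V →ₗ[K] V) (Φ : Dual K V →ₗ[K] V →ₗ[K] P) :
    ∑ i, Φ (γ.dualMap (e.coord i)) (e i) = ∑ i, Φ (e.coord i) (γ (e i)) := by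
  have hγ := fun i => (e.sum_dual_apply_smul_coord (γ.dualMap (e.coord i))).symm
  simp only [LinearMap.dualMap_apply] at hγ
  simp only [hγ, map_sum, map_smul, LinearMap.sum_apply, LinearMap.smul_apply]
  rw [Finset.sum_comm]
  exact Finset.sum_congr rfl fun j _ => e.sum_coord_smul_apply (Φ (e.coord j)) (γ (e j))

theorem sum_sum_dualMap_coord (γ : ι → V →ₗ[K] V) (Φ : ι → Dual K V →ₗ[K] V →ₗ[K] P) :
    ∑ i, ∑ j, Φ j ((γ j).dualMap (e.coord i)) (e i) =
      ∑ i, ∑ j, Φ j (e.coord i) (γ j (e i)) := by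
  rw [Finset.sum_comm, Finset.sum_comm (f := fun i j => Φ j (e.coord i) (γ j (e i)))]
  exact Finset.sum_congr rfl fun j _ => e.sum_dualMap_coord (γ j) (Φ j)

end Module.Basis

section Tensors

variable {K W κ : Type*} [CommSemiring K] [AddCommGroup W] [Module K W] [Fintype κ]

/-- `[r₁₂, r₁₃] + [r₁₃, r₂₃] - [r₁₂, r₂₃]` for `r = ∑ a_k ⊗ c_k`. -/
def mockLieYBE (br : W → W → W) (a c : κ → W) : W ⊗[K] (W ⊗[K] W) :=
  ∑ k, ∑ l, br (a k) (a l) ⊗ₜ[K] (c k ⊗ₜ[K] c l) +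
    ∑ k, ∑ l, a k ⊗ₜ[K] (a l ⊗ₜ[K] br (c k) (c l)) -
    ∑ k, ∑ l, a k ⊗ₜ[K] (br (c k) (a l) ⊗ₜ[K] c l)

/-- `(φ ⊗ id - id ⊗ ψ) r` for `r = ∑ a_k ⊗ c_k`. -/
def admissibilityDefect (φ ψ : W → W) (a c : κ → W) : W ⊗[K] W :=
  ∑ k, φ (a k) ⊗ₜ[K] c k - ∑ k, a k ⊗ₜ[K] ψ (c k)

end Tensors

section ODefect

variable {K A V : Type*} [CommSemiring K] [AddCommGroup A] [Module K A] [AddCommMonoid V]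
  [Module K V] (b : A →ₗ[K] A →ₗ[K] A) (ρ : A →ₗ[K] V →ₗ[K] V) (T : V →ₗ[K] A)

def oDefect : V →ₗ[K] V →ₗ[K] A :=
  b.compl₁₂ T T - (ρ ∘ₗ T).compr₂ T - ((ρ ∘ₗ T).compr₂ T).flip

theorem oDefect_apply (u v : V) :
    oDefect b ρ T u v = b (T u) (T v) - T (ρ (T u) v) - T (ρ (T v) u) := rfl

theorem oDefect_eq_zero_iff :
    oDefect b ρ T = 0 ↔ ∀ u v, b (T u) (T v) = T (ρ (T u) v + ρ (T v) u) := by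
  simp only [LinearMap.ext_iff₂, oDefect_apply, LinearMap.zero_apply, map_add, sub_sub,
    sub_eq_zero]

end ODefect

section DualPairTensors

variable {K A V ι : Type*} [CommRing K] [AddCommGroup A] [Module K A] [AddCommGroup V]
  [Module K V] [Fintype ι] (e : Basis ι K V)

local notation "W" => A × Dual K V

/-- `f, g ∈ Hom(V, A) ≅ A ⊗ V^*`, placed in `W ⊗ W` with their `A`-factor first resp. second. -/
noncomputable def tensorOfLin (f g : V →ₗ[K] A) : W ⊗[K] W :=
  ∑ i, ((f (e i), 0) : W) ⊗ₜ[K] ((0 : A), e.coord i) +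
    ∑ i, ((0 : A), e.coord i) ⊗ₜ[K] ((g (e i), 0) : W)

/-- `D ∈ Hom(V ⊗ V, A) ≅ A ⊗ V^* ⊗ V^*`, with its `A`-factor placed in each of the three slots. -/
noncomputable def tensorOfBilin (D : V →ₗ[K] V →ₗ[K] A) : W ⊗[K] (W ⊗[K] W) :=
  ∑ i, ∑ j, (((D (e i) (e j), 0) : W) ⊗ₜ[K] (((0 : A), e.coord i) ⊗ₜ[K] ((0 : A), e.coord j)) +
    ((0 : A), e.coord i) ⊗ₜ[K] (((D (e i) (e j), 0) : W) ⊗ₜ[K] ((0 : A), e.coord j)) +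
    ((0 : A), e.coord i) ⊗ₜ[K] (((0 : A), e.coord j) ⊗ₜ[K] ((D (e i) (e j), 0) : W)))

def evalDual (v : V) : W →ₗ[K] K := Dual.eval K V v ∘ₗ LinearMap.snd K A (Dual K V)

theorem tensorOfLin_eq_zero_iff (f g : V →ₗ[K] A) :
    tensorOfLin e f g = 0 ↔ f = 0 ∧ g = 0 := by
  classical
  refine ⟨fun h => ⟨e.ext fun p => ?_, e.ext fun p => ?_⟩, fun ⟨hf, hg⟩ => ?_⟩
  · have := congrArg ((TensorProduct.rid K A).toLinearMap ∘ₗ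
      map (LinearMap.fst K A (Dual K V)) (evalDual (e p))) h
    simpa [tensorOfLin, evalDual, Finsupp.single_apply] using this
  · have := congrArg ((TensorProduct.lid K A).toLinearMap ∘ₗ
      map (evalDual (e p)) (LinearMap.fst K A (Dual K V))) h
    simpa [tensorOfLin, evalDual, Finsupp.single_apply] using this
  · simp [tensorOfLin, hf, hg, Prod.mk_zero_zero]

theorem tensorOfBilin_eq_zero_iff (D : V →ₗ[K] V →ₗ[K] A) : tensorOfBilin e D = 0 ↔ D = 0 := by
  classical
  refine ⟨fun h => LinearMap.ext_basis e e fun p q => ?_, fun hD => ?_⟩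
  · have := congrArg ((TensorProduct.rid K A).toLinearMap ∘ₗ map (LinearMap.fst K A (Dual K V))
      ((TensorProduct.lid K K).toLinearMap ∘ₗ map (evalDual (e p)) (evalDual (e q)))) h
    simpa [tensorOfBilin, evalDual, Finsupp.single_apply] using this
  · simp [tensorOfBilin, hD, Prod.mk_zero_zero]

/- Over `A × Dual K V` the additive-group instances are not reducibly those used by `⊗`, so
`neg_tmul`, `tmul_neg` and `sub_tmul` do not fire; signs are carried as scalars `-1 : K`. -/
theorem zero_neg_eq_neg_one_smul (f : Dual K V) : ((0 : A), -f) = (-1 : K) • ((0 : A), f) := by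
  ext <;> simp

theorem sub_zero_eq_add_neg_one_smul (x y : A) : ((x - y, 0) : W) = (x, 0) + (-1 : K) • (y, 0) := by
  ext <;> simp [sub_eq_add_neg]

end DualPairTensors

section Semidirect

variable {K A V ι : Type*} [Field K] [AddCommGroup A] [Module K A] [AddCommGroup V] [Module K V]
  [Fintype ι] (e : Basis ι K V)

local notation "W" => A × Dual K V

section Bracket

variable (b : A →ₗ[K] A →ₗ[K] A) (ρ : A →ₗ[K] V →ₗ[K] V)

theorem sdBracket_inl_inl (x y : A) : sdBracket b ρ (x, 0) (y, 0) = (b x y, 0) := by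
  simp [sdBracket]

theorem sdBracket_inl_inr (x : A) (f : Dual K V) :
    sdBracket b ρ (x, 0) (0, f) = (0, (ρ x).dualMap f) := by
  simp [sdBracket]

theorem sdBracket_inr_inl (x : A) (f : Dual K V) :
    sdBracket b ρ (0, f) (x, 0) = (0, (ρ x).dualMap f) := by
  simp [sdBracket]

theorem sdBracket_inr_inr (f g : Dual K V) : sdBracket b ρ (0, f) (0, g) = 0 := by
  ext <;> simp [sdBracket]

end Bracket

theorem mockLieYBE_rLeft_rRight [DecidableEq ι] (b : A →ₗ[K] A →ₗ[K] A)
    (ρ : A →ₗ[K] V →ₗ[K] V) (T : V →ₗ[K] A) :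
    mockLieYBE (K := K) (sdBracket b ρ) (rLeft e T) (rRight e T) =
      tensorOfBilin e (oDefect b ρ T) := by
  simp only [mockLieYBE, Fintype.sum_sum_type, rLeft, rRight, Sum.elim_inl, Sum.elim_inr,
    sdBracket_inl_inl, sdBracket_inl_inr, sdBracket_inr_inl, sdBracket_inr_inr, zero_tmul,
    tmul_zero, Finset.sum_const_zero, add_zero, zero_add]
  simp only [map_neg, zero_neg_eq_neg_one_smul, ← smul_tmul', tmul_smul, smul_smul, neg_mul,
    one_mul, neg_neg, one_smul, ← Finset.smul_sum, Finset.sum_add_distrib]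
  -- The six terms containing `ρ^*` are moved onto `T`; `ha` and `hc` also swap the order of
  -- summation to match `tensorOfBilin`.
  let mk₁ := TensorProduct.mk K W (W ⊗[K] W)
  let mk₂ := TensorProduct.mk K W W
  let inl := LinearMap.inl K A (Dual K V)
  let inr := LinearMap.inr K A (Dual K V)
  let d : ι → W := fun i => ((0 : A), e.coord i)
  let γ : ι → V →ₗ[K] V := fun i => ρ (T (e i))
  have ha := Finset.sum_comm.trans
    (e.sum_sum_dualMap_coord γ fun i => mk₁.compl₁₂ inr (mk₂ (d i) ∘ₗ inl ∘ₗ T))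
  have hb := e.sum_sum_dualMap_coord γ fun j => mk₁.compl₁₂ inr (mk₂.flip (d j) ∘ₗ inl ∘ₗ T)
  have hc := (e.sum_sum_dualMap_coord γ
    fun j => mk₁.flip.compl₁₂ (mk₂ (d j) ∘ₗ inr) (inl ∘ₗ T)).trans Finset.sum_comm
  have hd := fun i =>
    e.sum_dualMap_coord (γ i) ((mk₂.flip.compl₁₂ inr (inl ∘ₗ T)).compr₂ (mk₁ (d i)))
  have he := e.sum_sum_dualMap_coord γ
    fun j => mk₁.flip.compl₁₂ (mk₂.flip (d j) ∘ₗ inr) (inl ∘ₗ T)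
  have hf := fun i => e.sum_dualMap_coord (γ i) ((mk₂.compl₁₂ inr (inl ∘ₗ T)).compr₂ (mk₁ (d i)))
  simp only [mk₁, mk₂, inl, inr, d, γ, LinearMap.compl₁₂_apply, LinearMap.compr₂_apply,
    LinearMap.flip_apply, LinearMap.coe_comp, Function.comp_apply, TensorProduct.mk_apply,
    LinearMap.inl_apply, LinearMap.inr_apply] at ha hb hc hd he hf
  rw [ha, hb, hc, he]
  simp only [hd, hf, tensorOfBilin, oDefect_apply, sub_zero_eq_add_neg_one_smul, add_tmul,
    tmul_add, ← smul_tmul', tmul_smul, Finset.sum_add_distrib, ← Finset.smul_sum]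
  module

theorem admissibilityDefect_rLeft_rRight [DecidableEq ι] (N S : A →ₗ[K] A) (α β : V →ₗ[K] V)
    (T : V →ₗ[K] A) :
    admissibilityDefect (K := K) (cwMap N β) (cwMap S α) (rLeft e T) (rRight e T) =
      tensorOfLin e (N ∘ₗ T - T ∘ₗ α) (S ∘ₗ T - T ∘ₗ β) := by
  simp only [admissibilityDefect, Fintype.sum_sum_type, rLeft, rRight, Sum.elim_inl, Sum.elim_inr,
    cwMap, map_zero, map_neg]
  simp only [zero_neg_eq_neg_one_smul, ← smul_tmul', ← Finset.smul_sum]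
  let inl := LinearMap.inl K A (Dual K V)
  let inr := LinearMap.inr K A (Dual K V)
  have hα := e.sum_dualMap_coord α ((TensorProduct.mk K W W).flip.compl₁₂ inr (inl ∘ₗ T))
  have hβ := e.sum_dualMap_coord β ((TensorProduct.mk K W W).compl₁₂ inr (inl ∘ₗ T))
  simp only [inl, inr, LinearMap.compl₁₂_apply, LinearMap.flip_apply, LinearMap.coe_comp,
    Function.comp_apply, TensorProduct.mk_apply, LinearMap.inl_apply, LinearMap.inr_apply] at hα hβ
  rw [hα, hβ]
  simp only [tensorOfLin, LinearMap.sub_apply, LinearMap.coe_comp, Function.comp_apply,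
    sub_zero_eq_add_neg_one_smul, add_tmul, tmul_add, ← smul_tmul', tmul_smul,
    Finset.sum_add_distrib, ← Finset.smul_sum]
  module

end Semidirect

set_option maxSynthPendingDepth 3 in
theorem stmt18_general {K A V ι : Type*} [Field K]
    [AddCommGroup A] [Module K A] [AddCommGroup V] [Module K V]
    [Fintype ι] [DecidableEq ι] (e : Basis ι K V)
    (b : A →ₗ[K] A →ₗ[K] A) (N S : A →ₗ[K] A)
    (ρ : A →ₗ[K] V →ₗ[K] V) (α β : V →ₗ[K] V) (T : V →ₗ[K] A) :
    ((∑ k, ∑ l, (sdBracket b ρ (rLeft e T k) (rLeft e T l)) ⊗ₜ[K]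
          ((rRight e T k) ⊗ₜ[K] (rRight e T l)) +
      ∑ k, ∑ l, (rLeft e T k) ⊗ₜ[K]
          ((rLeft e T l) ⊗ₜ[K] (sdBracket b ρ (rRight e T k) (rRight e T l))) -
      ∑ k, ∑ l, (rLeft e T k) ⊗ₜ[K]
          ((sdBracket b ρ (rRight e T k) (rLeft e T l)) ⊗ₜ[K] (rRight e T l)) = 0) ∧
     (∑ k, (cwMap N β (rLeft e T k)) ⊗ₜ[K] (rRight e T k) -
      ∑ k, (rLeft e T k) ⊗ₜ[K] (cwMap S α (rRight e T k)) = 0) ∧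
     (∑ k, (cwMap S α (rLeft e T k)) ⊗ₜ[K] (rRight e T k) -
      ∑ k, (rLeft e T k) ⊗ₜ[K] (cwMap N β (rRight e T k)) = 0)) ↔
    ((∀ u v : V, b (T u) (T v) = T (ρ (T u) v + ρ (T v) u)) ∧
     (∀ v : V, N (T v) = T (α v)) ∧
     (∀ v : V, T (β v) = S (T v))) := by
  change mockLieYBE (sdBracket b ρ) (rLeft e T) (rRight e T) = 0 ∧
      admissibilityDefect (cwMap N β) (cwMap S α) (rLeft e T) (rRight e T) = 0 ∧
      admissibilityDefect (cwMap S α) (cwMap N β) (rLeft e T) (rRight e T) = 0 ↔ _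
  rw [mockLieYBE_rLeft_rRight, admissibilityDefect_rLeft_rRight,
    admissibilityDefect_rLeft_rRight, tensorOfBilin_eq_zero_iff, tensorOfLin_eq_zero_iff,
    tensorOfLin_eq_zero_iff, oDefect_eq_zero_iff]
  simp only [sub_eq_zero, LinearMap.ext_iff, LinearMap.coe_comp, Function.comp_apply,
    eq_comm (a := T (β _))]
  tauto

set_option maxSynthPendingDepth 3 in
/-- `r = T - τ(T)` is an antisymmetric solution of the `(S+α^*)`-admissible mock-Lie
Yang-Baxter equation in `(A ⋉_{ρ^*} V^*, N+β^*)` iff `T` is a weak `𝒪`-operator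
associated to `(V, ρ)` and `α` satisfying `T ∘ β = S ∘ T`. -/
theorem stmt18 {K A V ι : Type*} [Field K] [CharZero K]
    [AddCommGroup A] [Module K A] [AddCommGroup V] [Module K V]
    [Fintype ι] [DecidableEq ι] (e : Basis ι K V)
    (b : A →ₗ[K] A →ₗ[K] A) (N S : A →ₗ[K] A)
    (ρ : A →ₗ[K] V →ₗ[K] V) (α β : V →ₗ[K] V) (T : V →ₗ[K] A)
    (hcomm : ∀ x y : A, b x y = b y x)
    (hjac : ∀ x y z : A, b x (b y z) + b y (b z x) + b z (b x y) = 0)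
    (hN : ∀ x y : A, b (N x) (N y) + N (N (b x y)) = N (b (N x) y) + N (b x (N y)))
    (hrep : ∀ (x y : A) (v : V), ρ (b x y) v = - ρ x (ρ y v) - ρ y (ρ x v))
    -- `(V^*, ρ^*, β^*)` is a representation of `(A,[,],N)`
    (hdualrep : ∀ (x : A) (f : Dual K V),
      (ρ (N x)).dualMap (β.dualMap f) + β.dualMap (β.dualMap ((ρ x).dualMap f)) =
        β.dualMap ((ρ (N x)).dualMap f) + β.dualMap ((ρ x).dualMap (β.dualMap f))) :
    ((∑ k, ∑ l, (sdBracket b ρ (rLeft e T k) (rLeft e T l)) ⊗ₜ[K]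
          ((rRight e T k) ⊗ₜ[K] (rRight e T l)) +
      ∑ k, ∑ l, (rLeft e T k) ⊗ₜ[K]
          ((rLeft e T l) ⊗ₜ[K] (sdBracket b ρ (rRight e T k) (rRight e T l))) -
      ∑ k, ∑ l, (rLeft e T k) ⊗ₜ[K]
          ((sdBracket b ρ (rRight e T k) (rLeft e T l)) ⊗ₜ[K] (rRight e T l)) = 0) ∧
     (∑ k, (cwMap N β (rLeft e T k)) ⊗ₜ[K] (rRight e T k) -
      ∑ k, (rLeft e T k) ⊗ₜ[K] (cwMap S α (rRight e T k)) = 0) ∧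
     (∑ k, (cwMap S α (rLeft e T k)) ⊗ₜ[K] (rRight e T k) -
      ∑ k, (rLeft e T k) ⊗ₜ[K] (cwMap N β (rRight e T k)) = 0)) ↔
    ((∀ u v : V, b (T u) (T v) = T (ρ (T u) v + ρ (T v) u)) ∧
     (∀ v : V, N (T v) = T (α v)) ∧
     (∀ v : V, T (β v) = S (T v))) :=
  stmt18_general e b N S ρ α β T
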